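/- Let σ, ω₁,…,ω_E be random variables on {0,…,β}, each symmetric about β/2, with P(σ = s) = (1/L)·Σ_e ℓ_e P(ω_e = s) for positive weights ℓ_e summing to L. Let ε = sqrt(max_e Var(ω_e) / min_e Var(ω_e)) − 1, and assume min_e Var(ω_e) > 0. Then d_KS(σ, N(σ)) ≤ max_e d_KS(ω_e, N(ω_e)) + ε, where N(X) denotes a Gaussian random variable with the same mean and variance as X. -/

import Mathlib

/-!
Symmetry about `β / 2` gives every `ω e` mean `β / 2`, hence so does the mixture `σ`; with a
common mean, the variance of the mixture is the mixture of the variances, so `Var σ` lies in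
`[v_min, v_max]`. The distribution function of `σ` is the same mixture, so `F_σ(t) - G_σ(t)` is a
convex combination of `(F_e(t) - G_e(t)) + (G_e(t) - G_σ(t))`, where `G_X` is the distribution
function of `N(X)`. The first term is at most the Kolmogorov distance of `ω e`; the second compares
two Gaussians with equal means and variances `u ≤ v` in `[v_min, v_max]`. Standardised, it is
`Φ(κ y) - Φ(y)` with `κ = √(v / u)`, which is at most `(κ - 1) |y| φ(y) ≤ κ - 1`: between `y` and
`κ y` the standard density is largest at `y`, and `|y| φ(y) ≤ 1`.
-/

open MeasureTheory ProbabilityTheory Set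

/-- The Kolmogorov–Smirnov distance between the distribution of a random variable `X`
(on a probability space `(Ω, P)`) and the Gaussian measure `ν` on `ℝ`. -/
noncomputable def dKSGauss {Ω : Type*} [MeasurableSpace Ω] (P : Measure Ω)
    (X : Ω → ℝ) (ν : Measure ℝ) : ℝ :=
  ⨆ t : ℝ, |(P {x | X x ≤ t}).toReal - (ν (Set.Iic t)).toReal|

/-- The Gaussian (normal) random variable `N(X)` with the same mean and variance as `X`,
represented by its distribution. -/
noncomputable def gaussOf {Ω : Type*} [MeasurableSpace Ω] (P : Measure Ω)
    (X : Ω → ℝ) : Measure ℝ :=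
  gaussianReal (∫ x, X x ∂P) (Real.toNNReal (variance X P))

instance isProbabilityMeasure_gaussOf {Ω : Type*} [MeasurableSpace Ω] (P : Measure Ω)
    (X : Ω → ℝ) : IsProbabilityMeasure (gaussOf P X) := by
  unfold gaussOf; infer_instance

lemma abs_sub_le_dKSGauss {Ω : Type*} [MeasurableSpace Ω] (P : Measure Ω) [IsProbabilityMeasure P]
    (X : Ω → ℝ) (ν : Measure ℝ) [IsProbabilityMeasure ν] (t : ℝ) :
    |(P {x | X x ≤ t}).toReal - (ν (Iic t)).toReal| ≤ dKSGauss P X ν := by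
  unfold dKSGauss
  refine le_ciSup (f := fun t => |(P {x | X x ≤ t}).toReal - (ν (Iic t)).toReal|) ⟨1, ?_⟩ t
  rintro _ ⟨s, rfl⟩
  exact abs_sub_le_of_nonneg_of_le ENNReal.toReal_nonneg measureReal_le_one ENNReal.toReal_nonneg
    measureReal_le_one

lemma gaussianPDFReal_zero_one (x : ℝ) :
    gaussianPDFReal 0 1 x = (Real.sqrt (2 * Real.pi))⁻¹ * Real.exp (-x ^ 2 / 2) := by
  simp [gaussianPDFReal]

lemma gaussianPDFReal_zero_one_le_of_sq_le {c x : ℝ} (h : c ^ 2 ≤ x ^ 2) :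
    gaussianPDFReal 0 1 x ≤ gaussianPDFReal 0 1 c := by
  rw [gaussianPDFReal_zero_one, gaussianPDFReal_zero_one]
  gcongr

lemma abs_mul_gaussianPDFReal_zero_one_le_one (y : ℝ) : |y| * gaussianPDFReal 0 1 y ≤ 1 := by
  have hy : |y| ≤ Real.exp (y ^ 2 / 2) := by
    nlinarith [Real.add_one_le_exp (y ^ 2 / 2), sq_abs y, sq_nonneg (|y| - 1)]
  have hc : (Real.sqrt (2 * Real.pi))⁻¹ ≤ 1 :=
    inv_le_one_of_one_le₀ (Real.one_le_sqrt.2 (by linarith [Real.pi_gt_three]))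
  calc |y| * gaussianPDFReal 0 1 y
      ≤ Real.exp (y ^ 2 / 2) * ((Real.sqrt (2 * Real.pi))⁻¹ * Real.exp (-y ^ 2 / 2)) := by
        rw [← gaussianPDFReal_zero_one]; gcongr; exact gaussianPDFReal_nonneg 0 1 y
    _ = (Real.sqrt (2 * Real.pi))⁻¹ := by
        rw [mul_left_comm, ← Real.exp_add]; ring_nf; simp
    _ ≤ 1 := hc

lemma cdf_gaussianReal (m : ℝ) {v : ℝ} (hv : 0 < v) (t : ℝ) :
    cdf (gaussianReal m v.toNNReal) t = cdf (gaussianReal 0 1) ((t - m) / Real.sqrt v) := by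
  have hs : 0 < Real.sqrt v := Real.sqrt_pos.2 hv
  have hmap :
      (gaussianReal 0 1).map (fun x => Real.sqrt v * x + m) = gaussianReal m v.toNNReal := by
    rw [show (fun x => Real.sqrt v * x + m) = (· + m) ∘ (Real.sqrt v * ·) from rfl,
      ← Measure.map_map (by fun_prop) (by fun_prop), gaussianReal_map_const_mul,
      gaussianReal_map_add_const]
    congr 1
    · ring
    · ext; simp [Real.sq_sqrt hv.le, hv.le]
  have hpre : (fun x => Real.sqrt v * x + m) ⁻¹' Iic t = Iic ((t - m) / Real.sqrt v) := by
    ext x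
    simp only [mem_preimage, mem_Iic, le_div_iff₀ hs]
    constructor <;> intro h <;> linarith
  rw [cdf_eq_real, cdf_eq_real, ← hmap, map_measureReal_apply (by fun_prop) measurableSet_Iic, hpre]

lemma abs_cdf_sub_le_of_density_le {a b c : ℝ}
    (h : ∀ x ∈ uIoc a b, gaussianPDFReal 0 1 x ≤ gaussianPDFReal 0 1 c) :
    |cdf (gaussianReal 0 1) b - cdf (gaussianReal 0 1) a| ≤ |b - a| * gaussianPDFReal 0 1 c := by
  wlog hab : a ≤ b generalizing a b
  · rw [abs_sub_comm, abs_sub_comm b]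
    exact this (uIoc_comm a b ▸ h) (le_of_not_ge hab)
  rw [uIoc_of_le hab] at h
  have hΦ : cdf (gaussianReal 0 1) b - cdf (gaussianReal 0 1) a
      = ∫ x in Ioc a b, gaussianPDFReal 0 1 x := by
    have h := StieltjesFunction.measure_Ioc (cdf (gaussianReal 0 1)) a b
    rw [measure_cdf, gaussianReal_apply_eq_integral 0 one_ne_zero] at h
    rw [← ENNReal.ofReal_eq_ofReal_iff (sub_nonneg.2 (monotone_cdf _ hab))
      (setIntegral_nonneg measurableSet_Ioc fun x _ => gaussianPDFReal_nonneg 0 1 x), h]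
  rw [hΦ, abs_of_nonneg (sub_nonneg.2 hab), abs_of_nonneg
    (setIntegral_nonneg measurableSet_Ioc fun x _ => gaussianPDFReal_nonneg 0 1 x)]
  calc ∫ x in Ioc a b, gaussianPDFReal 0 1 x ≤ ∫ _ in Ioc a b, gaussianPDFReal 0 1 c :=
        setIntegral_mono_on (integrable_gaussianPDFReal 0 1).integrableOn
          (integrableOn_const (by simp)) measurableSet_Ioc h
    _ = (b - a) * gaussianPDFReal 0 1 c := by simp [hab]

lemma abs_cdf_mul_sub_le {κ : ℝ} (hκ : 1 ≤ κ) (y : ℝ) :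
    |cdf (gaussianReal 0 1) (κ * y) - cdf (gaussianReal 0 1) y| ≤ κ - 1 := by
  have hdens : ∀ x ∈ uIoc y (κ * y), gaussianPDFReal 0 1 x ≤ gaussianPDFReal 0 1 y := by
    intro x hx
    apply gaussianPDFReal_zero_one_le_of_sq_le
    rcases mem_uIoc.1 hx with ⟨h1, h2⟩ | ⟨h1, h2⟩ <;> rcases le_total 0 y with hy | hy <;> nlinarith
  calc _ ≤ |κ * y - y| * gaussianPDFReal 0 1 y := abs_cdf_sub_le_of_density_le hdens
    _ = (κ - 1) * (|y| * gaussianPDFReal 0 1 y) := by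
        rw [← sub_one_mul, abs_mul, abs_of_nonneg (by linarith)]; ring
    _ ≤ κ - 1 := mul_le_of_le_one_right (by linarith) (abs_mul_gaussianPDFReal_zero_one_le_one y)

lemma abs_cdf_gaussianReal_sub_le {u v : ℝ} (hu : 0 < u) (huv : u ≤ v) (m t : ℝ) :
    |cdf (gaussianReal m u.toNNReal) t - cdf (gaussianReal m v.toNNReal) t|
      ≤ Real.sqrt (v / u) - 1 := by
  have hv : 0 < v := hu.trans_le huv
  have hscale : (t - m) / Real.sqrt u = Real.sqrt (v / u) * ((t - m) / Real.sqrt v) := by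
    rw [Real.sqrt_div hv.le]
    field_simp [(Real.sqrt_pos.2 hu).ne', (Real.sqrt_pos.2 hv).ne']
  rw [cdf_gaussianReal m hu, cdf_gaussianReal m hv, hscale]
  exact abs_cdf_mul_sub_le (Real.one_le_sqrt.2 ((one_le_div hu).2 huv)) _

lemma abs_cdf_gaussianReal_sub_le_of_mem_Icc {lo hi u v : ℝ} (hlo : 0 < lo)
    (hu : u ∈ Icc lo hi) (hv : v ∈ Icc lo hi) (m t : ℝ) :
    |cdf (gaussianReal m u.toNNReal) t - cdf (gaussianReal m v.toNNReal) t|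
      ≤ Real.sqrt (hi / lo) - 1 := by
  wlog huv : u ≤ v generalizing u v
  · rw [abs_sub_comm]; exact this hv hu (le_of_not_ge huv)
  have hratio : Real.sqrt (v / u) ≤ Real.sqrt (hi / lo) :=
    Real.sqrt_le_sqrt (div_le_div₀ (hlo.le.trans hu.1 |>.trans huv |>.trans hv.2) hv.2 hlo hu.1)
  linarith [abs_cdf_gaussianReal_sub_le (hlo.trans_le hu.1) huv m t]

lemma abs_sum_mul_sub_le {ι : Type*} (s : Finset ι) {w a : ι → ℝ} {c B : ℝ}
    (hw0 : ∀ i ∈ s, 0 ≤ w i) (hw1 : ∑ i ∈ s, w i = 1) (ha : ∀ i ∈ s, |a i - c| ≤ B) :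
    |∑ i ∈ s, w i * a i - c| ≤ B := by
  rw [abs_sub_comm, mem_Icc_iff_abs_le]
  exact (convex_Icc _ _).sum_mem hw0 hw1 fun i hi => by
    rw [← mem_Icc_iff_abs_le, abs_sub_comm]; exact ha i hi

section Discrete

variable {Ω : Type*} [MeasurableSpace Ω] {P : Measure Ω} {β : ℕ} {X : Ω → ℝ}

lemma integral_comp_eq_sum_range [IsFiniteMeasure P] (hX : Measurable X)
    (hval : ∀ x, ∃ k : ℕ, k ≤ β ∧ X x = k) (g : ℝ → ℝ) :
    ∫ x, g (X x) ∂P = ∑ k ∈ Finset.range (β + 1), g k * (P {x | X x = k}).toReal := by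
  have hlevel (k : ℕ) : MeasurableSet {x | X x = k} := hX (measurableSet_singleton _)
  have hsplit : (fun x => g (X x))
      = fun x => ∑ k ∈ Finset.range (β + 1), {y | X y = k}.indicator (fun _ => g k) x := by
    funext x
    obtain ⟨k₀, hk₀, hx⟩ := hval x
    rw [Finset.sum_eq_single_of_mem k₀ (Finset.mem_range.2 (Nat.lt_succ_of_le hk₀))]
    · rw [indicator_of_mem (by exact hx), hx]
    · intro k _ hk
      exact indicator_of_notMem (fun h : X x = k => hk (Nat.cast_injective (h.symm.trans hx))) _
  rw [hsplit, integral_finsetSum _ fun (k : ℕ) _ => (integrable_const (g k)).indicator (hlevel k)]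
  refine Finset.sum_congr rfl fun k _ => ?_
  rw [integral_indicator_const _ (hlevel k), smul_eq_mul, mul_comm, measureReal_def]

lemma integral_comp_eq_integral_comp_sub [IsFiniteMeasure P] (hX : Measurable X)
    (hval : ∀ x, ∃ k : ℕ, k ≤ β ∧ X x = k)
    (hsym : ∀ s : ℝ, P {x | X x = s} = P {x | X x = β - s}) (g : ℝ → ℝ) :
    ∫ x, g (X x) ∂P = ∫ x, g (β - X x) ∂P := by
  rw [integral_comp_eq_sum_range hX hval, integral_comp_eq_sum_range hX hval (fun y => g (β - y)),
    ← Finset.sum_range_reflect]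
  refine Finset.sum_congr rfl fun k hk => ?_
  have hkβ : k ≤ β := Nat.lt_succ_iff.1 (Finset.mem_range.1 hk)
  rw [Nat.add_sub_cancel, Nat.cast_sub hkβ, hsym k]

lemma integral_eq_half_of_symm [IsProbabilityMeasure P] (hX : Measurable X)
    (hval : ∀ x, ∃ k : ℕ, k ≤ β ∧ X x = k)
    (hsym : ∀ s : ℝ, P {x | X x = s} = P {x | X x = β - s}) :
    ∫ x, X x ∂P = β / 2 := by
  have hint : Integrable X P := by
    refine .of_bound hX.aestronglyMeasurable β (ae_of_all _ fun x => ?_)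
    obtain ⟨k, hk, hx⟩ := hval x
    rw [hx, Real.norm_natCast]
    exact_mod_cast hk
  have h := integral_comp_eq_integral_comp_sub hX hval hsym id
  simp only [id, integral_sub (integrable_const _) hint, integral_const, probReal_univ,
    one_smul] at h
  linarith

lemma toReal_measure_le_eq_integral (hX : Measurable X) (t : ℝ) :
    (P {x | X x ≤ t}).toReal = ∫ x, (Iic t).indicator 1 (X x) ∂P := by
  have h : (fun x => (Iic t).indicator (1 : ℝ → ℝ) (X x)) = {x | X x ≤ t}.indicator 1 := by
    funext x; by_cases hx : X x ≤ t <;> simp [hx]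
  rw [h, integral_indicator_one (show MeasurableSet {x | X x ≤ t} from hX measurableSet_Iic),
    measureReal_def]

variable {E : Type*} [Fintype E]

/-- Non-integrable `g` contribute junk `0`s; for the finitely-valued variables below every
`g ∘ σ` and `g ∘ ω e` is integrable, so this says that the law of `σ` is the `w`-mixture of the
laws of the `ω e`. -/
def IsLawMixture (P : Measure Ω) (σ : Ω → ℝ) (w : E → ℝ) (ω : E → Ω → ℝ) : Prop :=
  ∀ g : ℝ → ℝ, ∫ x, g (σ x) ∂P = ∑ e, w e * ∫ x, g (ω e x) ∂P

namespace IsLawMixture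

variable {σ : Ω → ℝ} {w : E → ℝ} {ω : E → Ω → ℝ}

lemma of_pmf_eq [IsFiniteMeasure P] (hσ : Measurable σ) (hω : ∀ e, Measurable (ω e))
    (hσval : ∀ x, ∃ k : ℕ, k ≤ β ∧ σ x = k) (hωval : ∀ e x, ∃ k : ℕ, k ≤ β ∧ ω e x = k)
    (hpmf : ∀ k : ℕ, (P {x | σ x = k}).toReal = ∑ e, w e * (P {x | ω e x = k}).toReal) :
    IsLawMixture P σ w ω := fun g => by
  simp only [integral_comp_eq_sum_range hσ hσval, integral_comp_eq_sum_range (hω _) (hωval _),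
    hpmf, Finset.mul_sum]
  rw [Finset.sum_comm]
  exact Finset.sum_congr rfl fun e _ => Finset.sum_congr rfl fun k _ => by ring

lemma integral_eq (h : IsLawMixture P σ w ω) (hw : ∑ e, w e = 1) {m : ℝ}
    (hmean : ∀ e, ∫ x, ω e x ∂P = m) : ∫ x, σ x ∂P = m := by
  simpa only [id, hmean, ← Finset.sum_mul, hw, one_mul] using h id

lemma variance_eq (h : IsLawMixture P σ w ω) (hσ : AEMeasurable σ P)
    (hω : ∀ e, AEMeasurable (ω e) P) (hw : ∑ e, w e = 1) {m : ℝ}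
    (hmean : ∀ e, ∫ x, ω e x ∂P = m) :
    variance σ P = ∑ e, w e * variance (ω e) P := by
  simp only [variance_eq_integral hσ, variance_eq_integral (hω _), h.integral_eq hw hmean, hmean]
  exact h fun y => (y - m) ^ 2

lemma toReal_measure_le_eq (h : IsLawMixture P σ w ω) (hσ : Measurable σ)
    (hω : ∀ e, Measurable (ω e)) (t : ℝ) :
    (P {x | σ x ≤ t}).toReal = ∑ e, w e * (P {x | ω e x ≤ t}).toReal := by
  simp only [toReal_measure_le_eq_integral hσ, toReal_measure_le_eq_integral (hω _)]
  exact h _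

end IsLawMixture

end Discrete

theorem stmt_3_general {Ω : Type*} [MeasurableSpace Ω] (P : Measure Ω) [IsProbabilityMeasure P]
    {E : Type*} [Fintype E] [Nonempty E] (β : ℕ)
    (σ : Ω → ℝ) (ω : E → Ω → ℝ)
    (hmσ : Measurable σ) (hmω : ∀ e, Measurable (ω e))
    (hσval : ∀ x, ∃ k : ℕ, k ≤ β ∧ σ x = k)
    (hωval : ∀ e x, ∃ k : ℕ, k ≤ β ∧ ω e x = k)
    (hωsym : ∀ e (s : ℝ), P {x | ω e x = s} = P {x | ω e x = β - s})
    (ℓ : E → ℝ) (hℓ : ∀ e, 0 < ℓ e) (L : ℝ) (hL : L = ∑ e, ℓ e)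
    (hmix : ∀ s : ℝ, (P {x | σ x = s}).toReal
      = (1 / L) * ∑ e, ℓ e * (P {x | ω e x = s}).toReal)
    (ε : ℝ)
    (hε : ε = Real.sqrt
        ((Finset.univ.sup' Finset.univ_nonempty fun e => variance (ω e) P) /
         (Finset.univ.inf' Finset.univ_nonempty fun e => variance (ω e) P)) - 1)
    (hmin : 0 < Finset.univ.inf' Finset.univ_nonempty fun e => variance (ω e) P) :
    dKSGauss P σ (gaussOf P σ)
      ≤ (Finset.univ.sup' Finset.univ_nonempty fun e => dKSGauss P (ω e) (gaussOf P (ω e))) + ε := by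
  set vmin := Finset.univ.inf' Finset.univ_nonempty fun e => variance (ω e) P
  set vmax := Finset.univ.sup' Finset.univ_nonempty fun e => variance (ω e) P
  set M := Finset.univ.sup' Finset.univ_nonempty fun e => dKSGauss P (ω e) (gaussOf P (ω e))
  set w : E → ℝ := fun e => ℓ e / L
  have hLpos : 0 < L := hL ▸ Finset.sum_pos (fun e _ => hℓ e) Finset.univ_nonempty
  have hw0 : ∀ e ∈ Finset.univ, 0 ≤ w e := fun e _ => div_nonneg (hℓ e).le hLpos.le
  have hw1 : ∑ e, w e = 1 := by rw [← Finset.sum_div, ← hL, div_self hLpos.ne']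
  have hlaw : IsLawMixture P σ w ω := .of_pmf_eq hmσ hmω hσval hωval fun k => by
    rw [hmix, Finset.mul_sum]; exact Finset.sum_congr rfl fun e _ => by ring
  have hmean (e : E) : ∫ x, ω e x ∂P = β / 2 :=
    integral_eq_half_of_symm (hmω e) (hωval e) (hωsym e)
  have hωvar (e : E) : variance (ω e) P ∈ Icc vmin vmax :=
    ⟨Finset.inf'_le _ (Finset.mem_univ e),
      Finset.le_sup' (fun e => variance (ω e) P) (Finset.mem_univ e)⟩
  have hσvar : variance σ P ∈ Icc vmin vmax := by
    rw [hlaw.variance_eq hmσ.aemeasurable (fun e => (hmω e).aemeasurable) hw1 hmean]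
    exact (convex_Icc _ _).sum_mem hw0 hw1 fun e _ => hωvar e
  unfold dKSGauss
  refine ciSup_le fun t => ?_
  rw [hlaw.toReal_measure_le_eq hmσ hmω]
  refine abs_sum_mul_sub_le _ hw0 hw1 fun e _ =>
    (abs_sub_le _ ((gaussOf P (ω e) (Iic t)).toReal) _).trans (add_le_add ?_ ?_)
  · exact (abs_sub_le_dKSGauss P (ω e) _ t).trans
      (Finset.le_sup' (fun e => dKSGauss P (ω e) (gaussOf P (ω e))) (Finset.mem_univ e))
  · simp only [gaussOf, hlaw.integral_eq hw1 hmean, hmean, ← measureReal_def, ← cdf_eq_real, hε]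
    exact abs_cdf_gaussianReal_sub_le_of_mem_Icc hmin (hωvar e) hσvar _ _

/-- If `σ, ω_e` take values in `{0,…,β}`, are symmetric about `β/2`,
`P(σ = s) = (1/L) Σ_e ℓ_e P(ω_e = s)` with positive weights `ℓ_e` summing to `L`,
`ε = sqrt(max_e Var(ω_e) / min_e Var(ω_e)) − 1`, and `min_e Var(ω_e) > 0`, then
`d_KS(σ, N(σ)) ≤ max_e d_KS(ω_e, N(ω_e)) + ε`. -/
theorem stmt_3 {Ω : Type*} [MeasurableSpace Ω] (P : Measure Ω) [IsProbabilityMeasure P]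
    {E : Type*} [Fintype E] [Nonempty E] (β : ℕ)
    (σ : Ω → ℝ) (ω : E → Ω → ℝ)
    (hmσ : Measurable σ) (hmω : ∀ e, Measurable (ω e))
    (hσval : ∀ x, ∃ k : ℕ, k ≤ β ∧ σ x = k)
    (hωval : ∀ e x, ∃ k : ℕ, k ≤ β ∧ ω e x = k)
    (hσsym : ∀ s : ℝ, P {x | σ x = s} = P {x | σ x = β - s})
    (hωsym : ∀ e (s : ℝ), P {x | ω e x = s} = P {x | ω e x = β - s})
    (ℓ : E → ℝ) (hℓ : ∀ e, 0 < ℓ e) (L : ℝ) (hL : L = ∑ e, ℓ e)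
    (hmix : ∀ s : ℝ, (P {x | σ x = s}).toReal
      = (1 / L) * ∑ e, ℓ e * (P {x | ω e x = s}).toReal)
    (ε : ℝ)
    (hε : ε = Real.sqrt
        ((Finset.univ.sup' Finset.univ_nonempty fun e => variance (ω e) P) /
         (Finset.univ.inf' Finset.univ_nonempty fun e => variance (ω e) P)) - 1)
    (hmin : 0 < Finset.univ.inf' Finset.univ_nonempty fun e => variance (ω e) P) :
    dKSGauss P σ (gaussOf P σ)
      ≤ (Finset.univ.sup' Finset.univ_nonempty fun e => dKSGauss P (ω e) (gaussOf P (ω e))) + ε :=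
  stmt_3_general P β σ ω hmσ hmω hσval hωval hωsym ℓ hℓ L hL hmix ε hε hmin
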